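/- arXiv:1904.12209 — 4 statements merged into one kernel-verified Lean document; each statement's English description precedes it below -/
import Mathlib

section
/- Let Γ ⊂ ℤ² be a finite nonempty convex domain. The map π : ℋ_ℚ^Γ/ℋ_ℤ^Γ → (ℚ/ℤ)^{∂Γ} sending the class of H to the family ((Δ_Γ H)(b) mod ℤ)_{b ∈ ∂Γ} is a well-defined surjective group homomorphism, and its kernel is isomorphic to the sandpile group G_Γ via the map sending the class of H to [−Δ_Γ H]. In other words, there is an exact sequence 0 → G_Γ → ℋ_ℚ^Γ/ℋ_ℤ^Γ → (ℚ/ℤ)^{∂Γ} → 0. -/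
/-- Two vertices of `ℤ²` are adjacent iff their Euclidean distance is `1`. -/
def adj (u v : ℤ × ℤ) : Prop := (u.1 - v.1) ^ 2 + (u.2 - v.2) ^ 2 = 1

instance : DecidableRel adj := fun u v => by unfold adj; infer_instance

/-- The reduced Laplacian of a finite domain `Γ ⊂ ℤ²`. -/
def lap {R : Type*} [CommRing R] (Γ : Finset (ℤ × ℤ)) (f : ↥Γ → R) : ↥Γ → R :=
  fun v => (∑ w ∈ Γ.attach.filter (fun w => adj w.1 v.1), f w) - 4 * f v

lemma lap_add {R : Type*} [CommRing R] (Γ : Finset (ℤ × ℤ)) (f g : ↥Γ → R) :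
    lap Γ (f + g) = lap Γ f + lap Γ g := by
  funext v; simp [lap, Finset.sum_add_distrib]; ring

lemma lap_neg {R : Type*} [CommRing R] (Γ : Finset (ℤ × ℤ)) (f : ↥Γ → R) :
    lap Γ (-f) = -(lap Γ f) := by
  funext v; simp [lap]; ring

lemma lap_smul {R : Type*} [CommRing R] (Γ : Finset (ℤ × ℤ)) (c : R) (f : ↥Γ → R) :
    lap Γ (c • f) = c • lap Γ f := by
  funext v
  simp only [lap, Pi.smul_apply, smul_eq_mul, mul_sub, Finset.mul_sum]
  ring

lemma lap_zero {R : Type*} [CommRing R] (Γ : Finset (ℤ × ℤ)) :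
    lap Γ (0 : ↥Γ → R) = 0 := by
  funext v; simp [lap]

/-- The boundary `∂Γ`: vertices of `Γ` adjacent to some vertex of `ℤ² \ Γ`. -/
noncomputable def boundary (Γ : Finset (ℤ × ℤ)) : Finset (ℤ × ℤ) :=
  @Finset.filter _ (fun v => ∃ w : ℤ × ℤ, w ∉ Γ ∧ adj w v) (Classical.decPred _) Γ

lemma boundary_subset (Γ : Finset (ℤ × ℤ)) : boundary Γ ⊆ Γ :=
  @Finset.filter_subset _ (fun v => ∃ w : ℤ × ℤ, w ∉ Γ ∧ adj w v) (Classical.decPred _) Γ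

/-- A function on `Γ` is harmonic if its Laplacian vanishes on the interior `Γ \ ∂Γ`. -/
def Harmonic {R : Type*} [CommRing R] (Γ : Finset (ℤ × ℤ)) (f : ↥Γ → R) : Prop :=
  ∀ v : ↥Γ, (v : ℤ × ℤ) ∉ boundary Γ → lap Γ f v = 0

/-- `Γ ⊂ ℤ²` is a convex domain if it is the set of lattice points of a
convex open subset of `ℝ²`. -/
def IsConvexDomain (Γ : Finset (ℤ × ℤ)) : Prop :=
  ∃ P : Set (ℝ × ℝ), Convex ℝ P ∧ IsOpen P ∧
    ∀ v : ℤ × ℤ, v ∈ Γ ↔ ((v.1 : ℝ), (v.2 : ℝ)) ∈ P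

/-- The reduced Laplacian as an additive group homomorphism on `ℤ^Γ`. -/
def lapHom (Γ : Finset (ℤ × ℤ)) : (↥Γ → ℤ) →+ (↥Γ → ℤ) where
  toFun := lap Γ
  map_zero' := lap_zero Γ
  map_add' := lap_add Γ

/-- The sandpile group `G_Γ = ℤ^Γ / Δ_Γ(ℤ^Γ)`. -/
def SandpileGroup (Γ : Finset (ℤ × ℤ)) : Type :=
  (↥Γ → ℤ) ⧸ (lapHom Γ).range

instance (Γ : Finset (ℤ × ℤ)) : AddCommGroup (SandpileGroup Γ) :=
  inferInstanceAs (AddCommGroup ((↥Γ → ℤ) ⧸ (lapHom Γ).range))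

/-- The canonical projection `ℤ^Γ → G_Γ`. -/
def sandMk (Γ : Finset (ℤ × ℤ)) : (↥Γ → ℤ) →+ SandpileGroup Γ :=
  QuotientAddGroup.mk' _

/-- The rational-valued harmonic functions on `Γ`, as an additive subgroup of `ℚ^Γ`. -/
def HarmQ (Γ : Finset (ℤ × ℤ)) : AddSubgroup (↥Γ → ℚ) where
  carrier := {f | Harmonic Γ f}
  zero_mem' := fun v _ => by rw [lap_zero]; rfl
  add_mem' := by
    intro a b ha hb v hv
    rw [lap_add]
    simp [ha v hv, hb v hv]
  neg_mem' := by
    intro a ha v hv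
    rw [lap_neg]
    simp [ha v hv]

/-- The integer-valued harmonic functions on `Γ`, regarded as an additive
subgroup of `ℚ^Γ`. -/
def HarmZinQ (Γ : Finset (ℤ × ℤ)) : AddSubgroup (↥Γ → ℚ) where
  carrier := {f | Harmonic Γ f ∧ ∀ v : ↥Γ, ∃ z : ℤ, f v = (z : ℚ)}
  zero_mem' := ⟨(HarmQ Γ).zero_mem, fun v => ⟨0, by simp⟩⟩
  add_mem' := by
    intro a b ha hb
    refine ⟨(HarmQ Γ).add_mem ha.1 hb.1, fun v => ?_⟩
    obtain ⟨z1, h1⟩ := ha.2 v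
    obtain ⟨z2, h2⟩ := hb.2 v
    exact ⟨z1 + z2, by simp [h1, h2]⟩
  neg_mem' := by
    intro a ha
    refine ⟨(HarmQ Γ).neg_mem ha.1, fun v => ?_⟩
    obtain ⟨z, h⟩ := ha.2 v
    exact ⟨-z, by simp [h]⟩

/-- The rational-valued harmonic functions on `Γ` whose Laplacian is
integer-valued, as an additive subgroup of `ℚ^Γ`. -/
def HarmIntLap (Γ : Finset (ℤ × ℤ)) : AddSubgroup (↥Γ → ℚ) where
  carrier := {f | Harmonic Γ f ∧ ∀ v : ↥Γ, ∃ z : ℤ, lap Γ f v = (z : ℚ)}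
  zero_mem' := ⟨(HarmQ Γ).zero_mem, fun v => ⟨0, by rw [lap_zero]; simp⟩⟩
  add_mem' := by
    intro a b ha hb
    refine ⟨(HarmQ Γ).add_mem ha.1 hb.1, fun v => ?_⟩
    obtain ⟨z1, h1⟩ := ha.2 v
    obtain ⟨z2, h2⟩ := hb.2 v
    exact ⟨z1 + z2, by rw [lap_add]; simp [h1, h2]⟩
  neg_mem' := by
    intro a ha
    refine ⟨(HarmQ Γ).neg_mem ha.1, fun v => ?_⟩
    obtain ⟨z, h⟩ := ha.2 v
    exact ⟨-z, by rw [lap_neg]; simp [h]⟩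

/-- The integer-valued harmonic functions on `Γ`, as a `ℤ`-submodule of `ℤ^Γ`. -/
def HarmZ (Γ : Finset (ℤ × ℤ)) : Submodule ℤ (↥Γ → ℤ) where
  carrier := {f | Harmonic Γ f}
  zero_mem' := fun v _ => by rw [lap_zero]; rfl
  add_mem' := by
    intro a b ha hb v hv
    rw [lap_add]
    simp [ha v hv, hb v hv]
  smul_mem' := by
    intro c a ha v hv
    rw [lap_smul]
    simp [ha v hv]

/-- The rational-valued harmonic functions on `Γ`, as a `ℚ`-submodule of `ℚ^Γ`. -/
def HarmQmod (Γ : Finset (ℤ × ℤ)) : Submodule ℚ (↥Γ → ℚ) where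
  carrier := {f | Harmonic Γ f}
  zero_mem' := fun v _ => by rw [lap_zero]; rfl
  add_mem' := by
    intro a b ha hb v hv
    rw [lap_add]
    simp [ha v hv, hb v hv]
  smul_mem' := by
    intro c a ha v hv
    rw [lap_smul]
    simp [ha v hv]

/-- The subgroup `ℤ ⊂ ℚ` (range of the integer cast). -/
def intsInQ : AddSubgroup ℚ := (Int.castAddHom ℚ).range


/-!
Over `ℚ` the Laplacian is injective by a maximum principle: at the rightmost point where a
function with `Δ f = 0` attains a positive maximum, the four neighbour values (zero outside `Γ`)
average to that maximum, so the right neighbour lies in `Γ` and is maximal too. Hence `Δ` is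
bijective on `ℚ^Γ`, and solving `Δ H = (lifts of the boundary data, extended by 0)` shows that
`π` is onto. Over `ℤ`, every function agrees on the interior with some `Δ g`: for interior `v`,
`Δ δ_{v+(1,0)}` is `δ_v` plus terms strictly to the right of `v`. The kernel of `π` consists of
the classes of harmonic `H` with `Δ H` integral; on these `H ↦ [-Δ H]` is onto `G_Γ` by the
interior statement, and vanishes exactly on integer-valued `H`, because `Δ H = -Δ g` with `g`
integral forces `H = -g` by injectivity over `ℚ`.
-/

open Finset

lemma adj_iff {u v : ℤ × ℤ} :
    adj u v ↔ u = v + (1, 0) ∨ u = v - (1, 0) ∨ u = v + (0, 1) ∨ u = v - (0, 1) := by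
  obtain ⟨a, b⟩ := u
  obtain ⟨c, d⟩ := v
  simp only [adj, Prod.mk_add_mk, Prod.mk_sub_mk, Prod.mk.injEq]
  constructor
  · intro h
    have h₁ : -1 ≤ a - c ∧ a - c ≤ 1 := by constructor <;> nlinarith [sq_nonneg (b - d)]
    have h₂ : -1 ≤ b - d ∧ b - d ≤ 1 := by constructor <;> nlinarith [sq_nonneg (a - c)]
    obtain ⟨h₁, h₁'⟩ := h₁
    obtain ⟨h₂, h₂'⟩ := h₂
    interval_cases hx : a - c <;> interval_cases hy : b - d <;> omega
  · rintro (⟨rfl, rfl⟩ | ⟨rfl, rfl⟩ | ⟨rfl, rfl⟩ | ⟨rfl, rfl⟩) <;> ring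

section Laplacian

variable {R : Type*} [CommRing R] {Γ : Finset (ℤ × ℤ)}

variable (Γ) in
def extendByZero (f : ↥Γ → R) (u : ℤ × ℤ) : R := if h : u ∈ Γ then f ⟨u, h⟩ else 0

@[simp]
lemma extendByZero_coe (f : ↥Γ → R) (v : ↥Γ) : extendByZero Γ f v = f v := by
  simp [extendByZero]

lemma extendByZero_of_notMem (f : ↥Γ → R) {u : ℤ × ℤ} (hu : u ∉ Γ) :
    extendByZero Γ f u = 0 := by
  simp [extendByZero, hu]

lemma lap_apply_eq_sum_nbrs (f : ↥Γ → R) (v : ↥Γ) :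
    lap Γ f v = extendByZero Γ f (v.1 + (1, 0)) + extendByZero Γ f (v.1 - (1, 0)) +
      extendByZero Γ f (v.1 + (0, 1)) + extendByZero Γ f (v.1 - (0, 1)) - 4 * f v := by
  have hsum : ∑ w ∈ Γ.attach.filter (fun w => adj w.1 v.1), f w
      = ∑ u ∈ ({v.1 + (1, 0), v.1 - (1, 0), v.1 + (0, 1), v.1 - (0, 1)} : Finset (ℤ × ℤ)),
          extendByZero Γ f u := by
    have hN : Γ.filter (fun u => adj u v.1) ⊆
        {v.1 + (1, 0), v.1 - (1, 0), v.1 + (0, 1), v.1 - (0, 1)} := by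
      intro u hu
      simpa [adj_iff] using (mem_filter.mp hu).2
    rw [← sum_subset hN, sum_filter, sum_filter, ← sum_attach Γ]
    · simp
    · intro u hu hu'
      refine extendByZero_of_notMem f fun huΓ => hu' (mem_filter.mpr ⟨huΓ, ?_⟩)
      simpa [adj_iff] using hu
  rw [lap, hsum, sum_insert, sum_insert, sum_insert, sum_singleton]
  · ring
  all_goals simp [Prod.ext_iff] <;> omega

lemma lap_intCast (g : ↥Γ → ℤ) :
    lap Γ (fun v => (g v : R)) = fun v => ((lap Γ g v : ℤ) : R) := by
  funext v
  simp [lap]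

variable (Γ R) in
def lapLinearMap : (↥Γ → R) →ₗ[R] (↥Γ → R) where
  toFun := lap Γ
  map_add' := lap_add Γ
  map_smul' := lap_smul Γ

end Laplacian

section MaxPrinciple

variable {K : Type*} [CommRing K] [LinearOrder K] [IsStrictOrderedRing K] {Γ : Finset (ℤ × ℤ)}

lemma exists_right_nbr_eq_of_forall_le {f : ↥Γ → K} {v : ↥Γ} (hv : lap Γ f v = 0)
    (hpos : 0 < f v) (hmax : ∀ u, f u ≤ f v) :
    ∃ h : v.1 + (1, 0) ∈ Γ, f ⟨_, h⟩ = f v := by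
  have hle : ∀ u, extendByZero Γ f u ≤ f v := fun u => by
    unfold extendByZero
    split_ifs
    exacts [hmax _, hpos.le]
  have hright : extendByZero Γ f (v.1 + (1, 0)) = f v := by
    linarith [lap_apply_eq_sum_nbrs f v, hle (v.1 + (1, 0)), hle (v.1 - (1, 0)),
      hle (v.1 + (0, 1)), hle (v.1 - (0, 1))]
  by_cases h : v.1 + (1, 0) ∈ Γ
  · exact ⟨h, by simpa [extendByZero, h] using hright⟩
  · rw [extendByZero_of_notMem f h] at hright
    exact absurd hright hpos.ne

lemma nonpos_of_lap_eq_zero {f : ↥Γ → K} (hf : lap Γ f = 0) (v : ↥Γ) : f v ≤ 0 := by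
  by_contra! hv
  obtain ⟨m, -, hm⟩ := univ.exists_max_image f ⟨v, mem_univ v⟩
  -- the rightmost point where `f` is maximal would have a maximal right neighbour
  obtain ⟨w, hwmax, hw⟩ := (univ.filter fun u => f u = f m).exists_max_image (fun u => u.1.1)
    ⟨m, by simp⟩
  have hwm : f w = f m := (mem_filter.mp hwmax).2
  obtain ⟨h, hfw⟩ := exists_right_nbr_eq_of_forall_le (congrFun hf w)
    (by linarith [hm v (mem_univ v)]) (fun u => hwm ▸ hm u (mem_univ u))
  have := hw ⟨_, h⟩ (by simp [hfw, hwm])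
  simp at this

lemma eq_zero_of_lap_eq_zero {f : ↥Γ → K} (hf : lap Γ f = 0) : f = 0 := by
  have hneg : lap Γ (-f) = 0 := by rw [lap_neg, hf, neg_zero]
  funext v
  exact le_antisymm (nonpos_of_lap_eq_zero hf v) (neg_nonpos.mp (nonpos_of_lap_eq_zero hneg v))

end MaxPrinciple

lemma lap_bijective {K : Type*} [Field K] [LinearOrder K] [IsStrictOrderedRing K]
    (Γ : Finset (ℤ × ℤ)) :
    Function.Bijective (lap Γ : (↥Γ → K) → (↥Γ → K)) := by
  have hinj : Function.Injective (lapLinearMap K Γ) :=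
    (injective_iff_map_eq_zero _).mpr fun f hf => eq_zero_of_lap_eq_zero hf
  exact ⟨hinj, LinearMap.injective_iff_surjective.mp hinj⟩

section InteriorSurjectivity

variable {R : Type*} [CommRing R] {Γ : Finset (ℤ × ℤ)}

lemma mem_of_adj_of_notMem_boundary {u v : ℤ × ℤ} (hv : v ∈ Γ) (hvb : v ∉ boundary Γ)
    (huv : adj u v) : u ∈ Γ := by
  by_contra hu
  exact hvb (by simp only [boundary, mem_filter]; exact ⟨hv, u, hu, huv⟩)

lemma extendByZero_single (w : ↥Γ) (c : R) (u : ℤ × ℤ) :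
    extendByZero Γ (Pi.single w c) u = if u = w.1 then c else 0 := by
  unfold extendByZero
  split_ifs with h₁ h₂ h₂ <;> simp_all [Subtype.ext_iff]

lemma lap_single_of_fst_le {u v w : ↥Γ} (hw : w.1 = v.1 + (1, 0)) (hu : u.1.1 ≤ v.1.1)
    (c : R) :
    lap Γ (Pi.single w c) u = (Pi.single v c : ↥Γ → R) u := by
  have hfst {a b : ℤ × ℤ} (h : a = b) : a.1 = b.1 := congrArg Prod.fst h
  have h₁ : u.1 + (1, 0) = v.1 + (1, 0) ↔ u = v := by rw [add_left_inj, Subtype.ext_iff]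
  have h₂ : u.1 - (1, 0) ≠ v.1 + (1, 0) := fun h => by have := hfst h; simp at this; omega
  have h₃ : u.1 + (0, 1) ≠ v.1 + (1, 0) := fun h => by have := hfst h; simp at this; omega
  have h₄ : u.1 - (0, 1) ≠ v.1 + (1, 0) := fun h => by have := hfst h; simp at this; omega
  have huw : u ≠ w := fun h => by have := hfst (congrArg Subtype.val h); simp [hw] at this; omega
  rw [lap_apply_eq_sum_nbrs]
  simp only [extendByZero_single, hw, h₁, if_neg h₂, if_neg h₃, if_neg h₄, Pi.single_apply,
    if_neg huw]
  ring

variable (R Γ) in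
def interiorLapRange : AddSubgroup (↥Γ → R) where
  carrier := {f | ∃ g, ∀ v : ↥Γ, v.1 ∉ boundary Γ → lap Γ g v = f v}
  zero_mem' := ⟨0, fun v _ => by rw [lap_zero]⟩
  add_mem' := by
    rintro f₁ f₂ ⟨g₁, hg₁⟩ ⟨g₂, hg₂⟩
    refine ⟨g₁ + g₂, fun v hv => ?_⟩
    rw [lap_add, Pi.add_apply, Pi.add_apply, hg₁ v hv, hg₂ v hv]
  neg_mem' := by
    rintro f ⟨g, hg⟩
    exact ⟨-g, fun v hv => by rw [lap_neg, Pi.neg_apply, Pi.neg_apply, hg v hv]⟩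

variable (Γ) in
def rightCount (u : ↥Γ) : ℕ := #(Γ.filter fun w => u.1.1 < w.1)

lemma rightCount_lt {u u' : ↥Γ} (h : u.1.1 < u'.1.1) : rightCount Γ u' < rightCount Γ u := by
  refine card_lt_card ⟨fun w hw => ?_, fun hsub => ?_⟩
  · simp only [mem_filter] at hw ⊢
    exact ⟨hw.1, h.trans hw.2⟩
  · simpa using (mem_filter.mp (hsub (mem_filter.mpr ⟨u'.2, h⟩))).2

-- `δ_u = Δ δ_{u + (1,0)} - r` on the interior, where `r` lives strictly to the right of `u`.
lemma single_mem_interiorLapRange (u : ↥Γ) (c : R) :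
    Pi.single u c ∈ interiorLapRange R Γ := by
  by_cases hu : u.1 ∈ boundary Γ
  · refine ⟨0, fun v hv => ?_⟩
    have hvu : v ≠ u := fun h => hv (h ▸ hu)
    rw [lap_zero, Pi.zero_apply, Pi.single_eq_of_ne hvu]
  · have hw : u.1 + (1, 0) ∈ Γ :=
      mem_of_adj_of_notMem_boundary u.2 hu (adj_iff.mpr (Or.inl rfl))
    set w : ↥Γ := ⟨u.1 + (1, 0), hw⟩
    set r := lap Γ (Pi.single w c) - Pi.single u c
    have hr : r ∈ interiorLapRange R Γ := by
      rw [← Finset.univ_sum_single r]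
      refine sum_mem fun u' _ => ?_
      by_cases hu' : u'.1.1 ≤ u.1.1
      · simp [r, lap_single_of_fst_le (w := w) rfl hu']
      · exact single_mem_interiorLapRange u' (r u')
    rw [show Pi.single u c = lap Γ (Pi.single w c) - r by simp [r]]
    exact sub_mem ⟨_, fun _ _ => rfl⟩ hr
termination_by rightCount Γ u
decreasing_by exact rightCount_lt (by omega)

lemma exists_lap_eq_on_interior (f : ↥Γ → R) :
    ∃ g, ∀ v : ↥Γ, v.1 ∉ boundary Γ → lap Γ g v = f v := by
  have hf : f ∈ interiorLapRange R Γ := by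
    rw [← Finset.univ_sum_single f]
    exact sum_mem fun u _ => single_mem_interiorLapRange u (f u)
  exact hf

end InteriorSurjectivity

section ExactSequence

variable {Γ : Finset (ℤ × ℤ)}

lemma mem_harmZinQ {f : ↥Γ → ℚ} :
    f ∈ HarmZinQ Γ ↔ Harmonic Γ f ∧ ∀ v, ∃ z : ℤ, f v = z :=
  Iff.rfl

lemma sandMk_lap (g : ↥Γ → ℤ) : sandMk Γ (lap Γ g) = 0 :=
  (QuotientAddGroup.eq_zero_iff _).mpr ⟨g, rfl⟩

variable (Γ) in
abbrev HarmQuot : Type := ↥(HarmQ Γ) ⧸ (HarmZinQ Γ).addSubgroupOf (HarmQ Γ)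

variable (Γ) in
def fracBoundaryLap : ↥(HarmQ Γ) →+ (↥(boundary Γ) → ℚ ⧸ intsInQ) :=
  AddMonoidHom.mk'
    (fun H b => QuotientAddGroup.mk (lap Γ (H : ↥Γ → ℚ) ⟨b.1, boundary_subset Γ b.2⟩))
    (fun H₁ H₂ => by funext b; simp [lap_add])

lemma le_ker_fracBoundaryLap :
    (HarmZinQ Γ).addSubgroupOf (HarmQ Γ) ≤ (fracBoundaryLap Γ).ker := by
  intro H hH
  obtain ⟨-, hint⟩ := mem_harmZinQ.mp (AddSubgroup.mem_addSubgroupOf.mp hH)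
  choose g hg using hint
  have hHg : (H : ↥Γ → ℚ) = fun v => (g v : ℚ) := funext hg
  funext b
  simp only [fracBoundaryLap, AddMonoidHom.mk'_apply, Pi.zero_apply, QuotientAddGroup.eq_zero_iff,
    hHg, lap_intCast]
  exact ⟨_, rfl⟩

lemma fracBoundaryLap_surjective : Function.Surjective (fracBoundaryLap Γ) := by
  intro t
  choose q hq using fun b => QuotientAddGroup.mk_surjective (t b)
  obtain ⟨H, hH⟩ :=
    (lap_bijective Γ).2 fun v => if h : v.1 ∈ boundary Γ then q ⟨v.1, h⟩ else 0
  refine ⟨⟨H, fun v hv => by rw [hH]; exact dif_neg hv⟩, funext fun b => ?_⟩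
  simp [fracBoundaryLap, hH, b.2, hq]

variable (Γ) in
def fracBoundaryLapQuot : HarmQuot Γ →+ (↥(boundary Γ) → ℚ ⧸ intsInQ) :=
  QuotientAddGroup.lift _ (fracBoundaryLap Γ) le_ker_fracBoundaryLap

variable (Γ) in
def intLap : ↥(HarmIntLap Γ) →+ (↥Γ → ℤ) where
  toFun H v := (lap Γ (H : ↥Γ → ℚ) v).num
  map_zero' := by ext; simp [lap_zero]
  map_add' H₁ H₂ := by
    funext v
    obtain ⟨z₁, h₁⟩ := H₁.2.2 v
    obtain ⟨z₂, h₂⟩ := H₂.2.2 v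
    change (lap Γ ((H₁ : ↥Γ → ℚ) + (H₂ : ↥Γ → ℚ)) v).num =
      (lap Γ (H₁ : ↥Γ → ℚ) v).num + (lap Γ (H₂ : ↥Γ → ℚ) v).num
    rw [lap_add, Pi.add_apply, h₁, h₂, ← Int.cast_add, Rat.num_intCast, Rat.num_intCast,
      Rat.num_intCast]

lemma intCast_intLap (H : ↥(HarmIntLap Γ)) (v : ↥Γ) :
    (intLap Γ H v : ℚ) = lap Γ (H : ↥Γ → ℚ) v := by
  obtain ⟨z, hz⟩ := H.2.2 v
  simp [intLap, hz]

variable (Γ) in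
def toSandpile : ↥(HarmIntLap Γ) →+ SandpileGroup Γ := (sandMk Γ).comp (-intLap Γ)

lemma toSandpile_surjective : Function.Surjective (toSandpile Γ) := by
  intro x
  obtain ⟨f, rfl⟩ := QuotientAddGroup.mk'_surjective (lapHom Γ).range x
  obtain ⟨g, hg⟩ := exists_lap_eq_on_interior (-f)
  obtain ⟨H, hH⟩ := (lap_bijective Γ).2 fun v => ((-f v - lap Γ g v : ℤ) : ℚ)
  have hint : ∀ v, ∃ z : ℤ, lap Γ H v = z := fun v => ⟨_, congrFun hH v⟩
  have hharm : Harmonic Γ H := fun v hv => by simp [hH, hg v hv]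
  refine ⟨⟨H, hharm, hint⟩, ?_⟩
  have hlap : intLap Γ ⟨H, hharm, hint⟩ = -f - lap Γ g := by
    funext v
    exact_mod_cast (intCast_intLap ⟨H, hharm, hint⟩ v).trans (congrFun hH v)
  change toSandpile Γ _ = sandMk Γ f
  calc toSandpile Γ ⟨H, hharm, hint⟩ = sandMk Γ (lap Γ g + f) := by
        rw [toSandpile, AddMonoidHom.comp_apply, AddMonoidHom.neg_apply, hlap, neg_sub,
          sub_neg_eq_add]
    _ = sandMk Γ f := by rw [map_add, sandMk_lap, zero_add]

lemma mem_ker_toSandpile_iff {H : ↥(HarmIntLap Γ)} :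
    H ∈ (toSandpile Γ).ker ↔ ∀ v, ∃ z : ℤ, (H : ↥Γ → ℚ) v = z := by
  constructor
  · intro hH
    obtain ⟨g, hg⟩ := (QuotientAddGroup.eq_zero_iff _).mp hH
    have hlap : lap Γ ((H : ↥Γ → ℚ) + fun v => (g v : ℚ)) = 0 := by
      funext v
      have hgv : lap Γ g v = -intLap Γ H v := congrFun hg v
      rw [lap_add, lap_intCast, Pi.add_apply, ← intCast_intLap, hgv, Pi.zero_apply]
      push_cast
      ring
    intro v
    have hHg := congrFun (eq_zero_of_lap_eq_zero hlap) v
    exact ⟨-g v, by simpa [add_eq_zero_iff_eq_neg] using hHg⟩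
  · intro hint
    choose g hg using hint
    have hlap : intLap Γ H = lap Γ g := by
      funext v
      have hHg : (H : ↥Γ → ℚ) = fun v => (g v : ℚ) := funext hg
      simpa [hHg, lap_intCast] using intCast_intLap H v
    simp [toSandpile, hlap, sandMk_lap]

lemma harmIntLap_le_harmQ : HarmIntLap Γ ≤ HarmQ Γ := fun _ hH => hH.1

lemma mk_mem_ker_fracBoundaryLapQuot (H : ↥(HarmIntLap Γ)) :
    (QuotientAddGroup.mk (AddSubgroup.inclusion harmIntLap_le_harmQ H) : HarmQuot Γ) ∈
      (fracBoundaryLapQuot Γ).ker := by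
  funext b
  obtain ⟨z, hz⟩ := H.2.2 ⟨b.1, boundary_subset Γ b.2⟩
  exact (QuotientAddGroup.eq_zero_iff _).mpr ⟨z, hz.symm⟩

variable (Γ) in
def toKer : ↥(HarmIntLap Γ) →+ (fracBoundaryLapQuot Γ).ker :=
  AddMonoidHom.codRestrict
    ((QuotientAddGroup.mk' _).comp (AddSubgroup.inclusion harmIntLap_le_harmQ)) _
    mk_mem_ker_fracBoundaryLapQuot

lemma coe_toKer (H : ↥(HarmIntLap Γ)) :
    (toKer Γ H : HarmQuot Γ) =
      QuotientAddGroup.mk (AddSubgroup.inclusion harmIntLap_le_harmQ H) :=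
  rfl

lemma toKer_surjective : Function.Surjective (toKer Γ) := by
  rintro ⟨x, hx⟩
  induction x using QuotientAddGroup.induction_on with
  | H H =>
  have hint : ∀ v, ∃ z : ℤ, lap Γ (H : ↥Γ → ℚ) v = z := by
    intro v
    by_cases hb : v.1 ∈ boundary Γ
    · obtain ⟨z, hz⟩ := (QuotientAddGroup.eq_zero_iff _).mp (congrFun hx ⟨v.1, hb⟩)
      exact ⟨z, hz.symm⟩
    · exact ⟨0, by rw [H.2 v hb, Int.cast_zero]⟩
  exact ⟨⟨H, H.2, hint⟩, rfl⟩

lemma mem_ker_toKer_iff {H : ↥(HarmIntLap Γ)} :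
    H ∈ (toKer Γ).ker ↔ ∀ v, ∃ z : ℤ, (H : ↥Γ → ℚ) v = z := by
  rw [AddMonoidHom.mem_ker, ← ZeroMemClass.coe_eq_zero, coe_toKer, QuotientAddGroup.eq_zero_iff,
    AddSubgroup.mem_addSubgroupOf]
  exact ⟨fun h => h.2, fun h => ⟨H.2.1, h⟩⟩

lemma ker_toKer_eq_ker_toSandpile : (toKer Γ).ker = (toSandpile Γ).ker := by
  ext
  rw [mem_ker_toKer_iff, mem_ker_toSandpile_iff]

variable (Γ) in
noncomputable def kerEquivSandpile : (fracBoundaryLapQuot Γ).ker ≃+ SandpileGroup Γ :=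
  (QuotientAddGroup.quotientKerEquivOfSurjective _ toKer_surjective).symm.trans <|
    (QuotientAddGroup.quotientAddEquivOfEq ker_toKer_eq_ker_toSandpile).trans
      (QuotientAddGroup.quotientKerEquivOfSurjective _ toSandpile_surjective)

lemma kerEquivSandpile_toKer (H : ↥(HarmIntLap Γ)) :
    kerEquivSandpile Γ (toKer Γ H) = toSandpile Γ H := by
  have hsymm :
      (QuotientAddGroup.quotientKerEquivOfSurjective _ toKer_surjective).symm (toKer Γ H) =
        (H : ↥(HarmIntLap Γ) ⧸ (toKer Γ).ker) :=
    (AddEquiv.symm_apply_eq _).mpr rfl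
  rw [kerEquivSandpile, AddEquiv.trans_apply, AddEquiv.trans_apply, hsymm,
    QuotientAddGroup.quotientAddEquivOfEq_mk]
  rfl

end ExactSequence

theorem sandpile_exact_sequence_general (Γ : Finset (ℤ × ℤ)) :
    ∃ π : (↥(HarmQ Γ) ⧸ (HarmZinQ Γ).addSubgroupOf (HarmQ Γ)) →+ (↥(boundary Γ) → ℚ ⧸ intsInQ),
      (∀ H : ↥(HarmQ Γ),
        π (QuotientAddGroup.mk H) =
          fun b : ↥(boundary Γ) =>
            QuotientAddGroup.mk (lap Γ (↑H : ↥Γ → ℚ) ⟨b.1, boundary_subset Γ b.2⟩)) ∧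
      Function.Surjective π ∧
      ∃ e : ↥π.ker ≃+ SandpileGroup Γ,
        ∀ (H : ↥(HarmQ Γ)) (hH : QuotientAddGroup.mk H ∈ π.ker) (g : ↥Γ → ℤ),
          (∀ v : ↥Γ, (g v : ℚ) = lap Γ (↑H : ↥Γ → ℚ) v) →
          e ⟨QuotientAddGroup.mk H, hH⟩ = sandMk Γ (-g) := by
  refine ⟨fracBoundaryLapQuot Γ, fun H => rfl,
    QuotientAddGroup.lift_surjective_of_surjective _ _ fracBoundaryLap_surjective _,
    kerEquivSandpile Γ, fun H hH g hg => ?_⟩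
  have hmem : (H : ↥Γ → ℚ) ∈ HarmIntLap Γ := ⟨H.2, fun v => ⟨g v, (hg v).symm⟩⟩
  have hintLap : intLap Γ ⟨H, hmem⟩ = g :=
    funext fun v => Int.cast_injective ((intCast_intLap _ v).trans (hg v).symm)
  rw [show ⟨QuotientAddGroup.mk H, hH⟩ = toKer Γ ⟨H, hmem⟩ from rfl,
    kerEquivSandpile_toKer]
  simp [toSandpile, hintLap]

/-- For a finite nonempty convex domain `Γ ⊂ ℤ²`, the map
`π : ℋ_ℚ^Γ/ℋ_ℤ^Γ → (ℚ/ℤ)^{∂Γ}` sending the class of `H` to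
`((Δ_Γ H)(b) mod ℤ)_{b ∈ ∂Γ}` is a well-defined surjective group homomorphism,
and its kernel is isomorphic to the sandpile group `G_Γ` via the map sending
the class of `H` to `[−Δ_Γ H]`; i.e. there is an exact sequence
`0 → G_Γ → ℋ_ℚ^Γ/ℋ_ℤ^Γ → (ℚ/ℤ)^{∂Γ} → 0`. -/
theorem sandpile_exact_sequence (Γ : Finset (ℤ × ℤ)) (hne : Γ.Nonempty)
    (hconv : IsConvexDomain Γ) :
    ∃ π : (↥(HarmQ Γ) ⧸ (HarmZinQ Γ).addSubgroupOf (HarmQ Γ)) →+ (↥(boundary Γ) → ℚ ⧸ intsInQ),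
      (∀ H : ↥(HarmQ Γ),
        π (QuotientAddGroup.mk H) =
          fun b : ↥(boundary Γ) =>
            QuotientAddGroup.mk (lap Γ (↑H : ↥Γ → ℚ) ⟨b.1, boundary_subset Γ b.2⟩)) ∧
      Function.Surjective π ∧
      ∃ e : ↥π.ker ≃+ SandpileGroup Γ,
        ∀ (H : ↥(HarmQ Γ)) (hH : QuotientAddGroup.mk H ∈ π.ker) (g : ↥Γ → ℤ),
          (∀ v : ↥Γ, (g v : ℚ) = lap Γ (↑H : ↥Γ → ℚ) v) →
          e ⟨QuotientAddGroup.mk H, hH⟩ = sandMk Γ (-g) :=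
  sandpile_exact_sequence_general Γ
end

section
/- Let Γ ⊂ ℤ² be a finite nonempty convex domain. Every ℤ-basis of the module ℋ_ℤ^Γ of integer-valued harmonic functions on Γ is also a basis of the ℚ-vector space ℋ_ℚ^Γ of rational-valued harmonic functions on Γ; in particular, dim_ℚ ℋ_ℚ^Γ = |∂Γ|. -/
/-!
A harmonic function vanishing on `∂Γ` vanishes identically (maximum principle: at a positive
maximum with largest first coordinate, the right neighbour would be a larger maximizer). So
restriction to `∂Γ` is injective on `ℋ_ℚ^Γ`, while rank–nullity for the Laplacian `ℚ^Γ → ℚ^Γ₀`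
gives `dim ℋ_ℚ^Γ ≥ |Γ| - |Γ₀| = |∂Γ|`. Clearing denominators exhibits `ℋ_ℚ^Γ` as the
localization of `ℋ_ℤ^Γ` at `ℤ \ {0}`, and a basis of a module is a basis of its localization.
-/

lemma eq_or_eq_or_eq_or_eq_of_adj {w u : ℤ × ℤ} (h : adj w u) :
    w = (u.1 + 1, u.2) ∨ w = (u.1 - 1, u.2) ∨ w = (u.1, u.2 + 1) ∨ w = (u.1, u.2 - 1) := by
  obtain ⟨a, b⟩ := w
  unfold adj at h
  obtain ⟨ha₁, ha₂⟩ : -1 ≤ a - u.1 ∧ a - u.1 ≤ 1 := by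
    constructor <;> nlinarith [sq_nonneg (b - u.2)]
  obtain ⟨hb₁, hb₂⟩ : -1 ≤ b - u.2 ∧ b - u.2 ≤ 1 := by
    constructor <;> nlinarith [sq_nonneg (a - u.1)]
  simp only [Prod.mk.injEq]
  interval_cases h₁ : a - u.1 <;> interval_cases h₂ : b - u.2 <;> simp at h <;> omega

lemma adj_add_one_fst (u : ℤ × ℤ) : adj (u.1 + 1, u.2) u := by
  simp [adj]

lemma mem_of_adj_of_notMem_boundary_s4 {Γ : Finset (ℤ × ℤ)} {u w : ℤ × ℤ} (hu : u ∈ Γ)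
    (hint : u ∉ boundary Γ) (hw : adj w u) : w ∈ Γ := by
  classical
  by_contra hw'
  exact hint (Finset.mem_filter.mpr ⟨hu, w, hw', hw⟩)

lemma card_filter_adj_le_four (Γ : Finset (ℤ × ℤ)) (u : ℤ × ℤ) :
    (Γ.attach.filter (fun w => adj w.1 u)).card ≤ 4 := by
  classical
  calc (Γ.attach.filter (fun w => adj w.1 u)).card
      ≤ ({(u.1 + 1, u.2), (u.1 - 1, u.2), (u.1, u.2 + 1), (u.1, u.2 - 1)} : Finset (ℤ × ℤ)).card :=
        Finset.card_le_card_of_injOn Subtype.val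
          (fun w hw => by simpa using eq_or_eq_or_eq_or_eq_of_adj (Finset.mem_filter.mp hw).2)
          Subtype.val_injective.injOn
    _ ≤ 4 := Finset.card_le_four

theorem Harmonic.neg {R : Type*} [CommRing R] {Γ : Finset (ℤ × ℤ)} {f : ↥Γ → R}
    (hf : Harmonic Γ f) : Harmonic Γ (-f) := fun v hv => by
  rw [lap_neg, Pi.neg_apply, hf v hv, neg_zero]

section MaximumPrinciple

variable {R : Type*} [CommRing R] [LinearOrder R] [IsStrictOrderedRing R] {Γ : Finset (ℤ × ℤ)}
  {f : ↥Γ → R}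

/-- The at most four neighbour values sum to `4 * f u` and each is `≤ f u`. -/
lemma eq_of_adj_of_lap_eq_zero_of_forall_le {u : ↥Γ} (hlap : lap Γ f u = 0)
    (hmax : ∀ w, f w ≤ f u) (hnonneg : 0 ≤ f u) {w : ↥Γ} (hw : adj w.1 u.1) : f w = f u := by
  set N := Γ.attach.filter (fun w => adj w.1 u.1)
  have hsum : ∑ x ∈ N, (f u - f x) ≤ 0 := by
    have hN : (N.card : R) ≤ 4 := by exact_mod_cast card_filter_adj_le_four Γ u.1
    rw [Finset.sum_sub_distrib, Finset.sum_const, nsmul_eq_mul,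
      show ∑ x ∈ N, f x = 4 * f u from sub_eq_zero.mp hlap]
    nlinarith
  have hzero := (Finset.sum_eq_zero_iff_of_nonneg (fun x _ => sub_nonneg.mpr (hmax x))).mp
    (le_antisymm hsum (Finset.sum_nonneg fun x _ => sub_nonneg.mpr (hmax x)))
  exact (sub_eq_zero.mp (hzero w (Finset.mem_filter.mpr ⟨Finset.mem_attach _ _, hw⟩))).symm

theorem Harmonic.nonpos_of_nonpos_on_boundary (hf : Harmonic Γ f)
    (hb : ∀ v : ↥Γ, v.1 ∈ boundary Γ → f v ≤ 0) (v : ↥Γ) : f v ≤ 0 := by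
  obtain ⟨u, -, hu⟩ := Finset.exists_max_image Finset.univ (fun w : ↥Γ => toLex (f w, w.1.1))
    ⟨v, Finset.mem_univ v⟩
  have hmax : ∀ w, f w ≤ f u := fun w =>
    (Prod.Lex.toLex_le_toLex'.mp (hu w (Finset.mem_univ w))).1
  by_contra! hv
  have hpos : 0 < f u := hv.trans_le (hmax v)
  have hint : u.1 ∉ boundary Γ := fun h => (hb u h).not_gt hpos
  have hright := mem_of_adj_of_notMem_boundary_s4 u.2 hint (adj_add_one_fst u.1)
  have heq := eq_of_adj_of_lap_eq_zero_of_forall_le (hf u hint) hmax hpos.le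
    (w := ⟨_, hright⟩) (adj_add_one_fst u.1)
  have hfst := (Prod.Lex.toLex_le_toLex'.mp (hu ⟨_, hright⟩ (Finset.mem_univ _))).2 heq
  simp at hfst

theorem Harmonic.eq_zero_of_eq_zero_on_boundary (hf : Harmonic Γ f)
    (hb : ∀ v : ↥Γ, v.1 ∈ boundary Γ → f v = 0) : f = 0 := by
  funext v
  refine le_antisymm (hf.nonpos_of_nonpos_on_boundary (fun w hw => (hb w hw).le) v) ?_
  simpa using hf.neg.nonpos_of_nonpos_on_boundary (fun w hw => by simp [hb w hw]) v

end MaximumPrinciple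

def interiorLap (R : Type*) [CommRing R] (Γ : Finset (ℤ × ℤ)) :
    (↥Γ → R) →ₗ[R] ({v : ↥Γ // v.1 ∉ boundary Γ} → R) where
  toFun f v := lap Γ f v
  map_add' f g := by funext v; simp [lap_add]
  map_smul' c f := by funext v; simp [lap_smul]

lemma harmQmod_eq_ker_interiorLap (Γ : Finset (ℤ × ℤ)) :
    HarmQmod Γ = LinearMap.ker (interiorLap ℚ Γ) := by
  ext f
  simp [HarmQmod, Harmonic, interiorLap, funext_iff]

lemma card_subtype_mem_boundary (Γ : Finset (ℤ × ℤ)) :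
    Fintype.card {v : ↥Γ // v.1 ∈ boundary Γ} = (boundary Γ).card :=
  (Fintype.card_congr (Equiv.subtypeSubtypeEquivSubtype (boundary_subset Γ ·))).trans
    (Fintype.card_coe _)

lemma finrank_harmQmod_le (Γ : Finset (ℤ × ℤ)) :
    Module.finrank ℚ (HarmQmod Γ) ≤ (boundary Γ).card := by
  let restrict := LinearMap.funLeft ℚ ℚ (Subtype.val : {v : ↥Γ // v.1 ∈ boundary Γ} → ↥Γ)
  have hinj : Function.Injective (restrict ∘ₗ (HarmQmod Γ).subtype) := by
    rw [← LinearMap.ker_eq_bot, LinearMap.ker_eq_bot']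
    intro f hf
    exact Subtype.ext <| f.2.eq_zero_of_eq_zero_on_boundary fun v hv => congrFun hf ⟨v, hv⟩
  simpa [card_subtype_mem_boundary] using LinearMap.finrank_le_finrank_of_injective hinj

lemma le_finrank_harmQmod (Γ : Finset (ℤ × ℤ)) :
    (boundary Γ).card ≤ Module.finrank ℚ (HarmQmod Γ) := by
  have hrank := LinearMap.finrank_range_add_finrank_ker (interiorLap ℚ Γ)
  have hrange := Submodule.finrank_le (LinearMap.range (interiorLap ℚ Γ))
  have hinterior := Fintype.card_subtype_compl (fun v : ↥Γ => v.1 ∈ boundary Γ)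
  have hbdry := Fintype.card_subtype_le (fun v : ↥Γ => v.1 ∈ boundary Γ)
  simp only [Module.finrank_fintype_fun_eq_card, Fintype.card_coe] at hrank hrange hinterior hbdry
  rw [harmQmod_eq_ker_interiorLap, ← card_subtype_mem_boundary]
  omega

theorem finrank_harmQmod (Γ : Finset (ℤ × ℤ)) :
    Module.finrank ℚ (HarmQmod Γ) = (boundary Γ).card :=
  (finrank_harmQmod_le Γ).antisymm (le_finrank_harmQmod Γ)

lemma lap_comp_ringHom {R S : Type*} [CommRing R] [CommRing S] (φ : R →+* S)
    (Γ : Finset (ℤ × ℤ)) (f : ↥Γ → R) : lap Γ (φ ∘ f) = φ ∘ lap Γ f := by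
  funext v
  simp [lap, map_sum, map_ofNat]

lemma harmonic_comp_ringHom_iff {R S : Type*} [CommRing R] [CommRing S] {φ : R →+* S}
    (hφ : Function.Injective φ) {Γ : Finset (ℤ × ℤ)} {f : ↥Γ → R} :
    Harmonic Γ (φ ∘ f) ↔ Harmonic Γ f := by
  simp only [Harmonic, lap_comp_ringHom, Function.comp_apply, map_eq_zero_iff φ hφ]

def harmZToHarmQ (Γ : Finset (ℤ × ℤ)) : HarmZ Γ →ₗ[ℤ] HarmQmod Γ where
  toFun f := ⟨Int.castRingHom ℚ ∘ f.1,
    (harmonic_comp_ringHom_iff (Int.castRingHom ℚ).injective_int).mpr f.2⟩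
  map_add' f g := by ext; simp
  map_smul' n f := by ext; simp

lemma harmZToHarmQ_injective (Γ : Finset (ℤ × ℤ)) : Function.Injective (harmZToHarmQ Γ) :=
  fun f g h => Subtype.ext <| funext fun v => by
    simpa [harmZToHarmQ] using congrFun (congrArg Subtype.val h) v

instance isLocalizedModule_harmZToHarmQ (Γ : Finset (ℤ × ℤ)) :
    IsLocalizedModule (nonZeroDivisors ℤ) (harmZToHarmQ Γ) where
  map_units := (isLocalizedModule_id (nonZeroDivisors ℤ) (HarmQmod Γ) ℚ).map_units
  surj y := by
    obtain ⟨d, hd⟩ := IsLocalization.exist_integer_multiples_of_finite (nonZeroDivisors ℤ) y.1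
    choose g hg using hd
    have hdy : Int.castRingHom ℚ ∘ g = ((d : ℤ) • y : HarmQmod Γ).1 := funext hg
    have hharm : Harmonic Γ g := by
      rw [← harmonic_comp_ringHom_iff (Int.castRingHom ℚ).injective_int, hdy]
      exact ((d : ℤ) • y).2
    exact ⟨(⟨g, hharm⟩, d), Subtype.ext hdy.symm⟩
  exists_of_eq h := ⟨1, by rw [harmZToHarmQ_injective _ h]⟩

theorem harmZ_basis_is_harmQ_basis_general (Γ : Finset (ℤ × ℤ))
    {ι : Type} (B : Module.Basis ι ℤ ↥(HarmZ Γ)) :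
    (∃ C : Module.Basis ι ℚ ↥(HarmQmod Γ),
      ∀ (i : ι) (v : ↥Γ), (↑(C i) : ↥Γ → ℚ) v = ((↑(B i) : ↥Γ → ℤ) v : ℚ)) ∧
    Module.finrank ℚ ↥(HarmQmod Γ) = (boundary Γ).card := by
  refine ⟨⟨B.ofIsLocalizedModule ℚ (nonZeroDivisors ℤ) (harmZToHarmQ Γ), fun i v => ?_⟩,
    finrank_harmQmod Γ⟩
  simp [harmZToHarmQ]

/-- For a finite nonempty convex domain `Γ ⊂ ℤ²`, every `ℤ`-basis
of the module `ℋ_ℤ^Γ` of integer-valued harmonic functions is also a basis of the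
`ℚ`-vector space `ℋ_ℚ^Γ` of rational-valued harmonic functions (after casting the
values to `ℚ`); in particular `dim_ℚ ℋ_ℚ^Γ = |∂Γ|`. -/
theorem harmZ_basis_is_harmQ_basis (Γ : Finset (ℤ × ℤ)) (hne : Γ.Nonempty)
    (hconv : IsConvexDomain Γ) {ι : Type} (B : Module.Basis ι ℤ ↥(HarmZ Γ)) :
    (∃ C : Module.Basis ι ℚ ↥(HarmQmod Γ),
      ∀ (i : ι) (v : ↥Γ), (↑(C i) : ↥Γ → ℚ) v = ((↑(B i) : ↥Γ → ℤ) v : ℚ)) ∧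
    Module.finrank ℚ ↥(HarmQmod Γ) = (boundary Γ).card :=
  harmZ_basis_is_harmQ_basis_general Γ B
end

section
/- Let H : ℤ² → ℤ be harmonic on all of ℤ², let Γ ⊂ ℤ² be a finite nonempty convex domain, and let n ≥ 2 be an integer. Assume that the values {H(v) : v ∈ Γ} have greatest common divisor 1, and that n divides H(w) for every w ∈ ∂(ℤ² \ Γ). Then n divides (Δ_Γ(H|_Γ))(v) for every v ∈ Γ, and the element C = [−(1/n)·Δ_Γ(H|_Γ)] of the sandpile group G_Γ has order exactly n; in particular, G_Γ contains a cyclic subgroup {0, C, …, (n−1)C} of order n. -/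
/-- A function `H : ℤ² → ℤ` is harmonic on all of `ℤ²` if for every vertex the
sum of `H` over its neighbors equals `4·H(v)`. -/
def HarmonicZ2 (H : ℤ × ℤ → ℤ) : Prop :=
  ∀ v : ℤ × ℤ, (∑ᶠ w ∈ {w : ℤ × ℤ | adj w v}, H w) = 4 * H v

/-!
Harmonicity of `H` on `ℤ²` turns `Δ_Γ(H|_Γ)(v)` into minus the sum of `H` over the neighbours of `v`
outside `Γ`, which `n` divides. If `n g = Δ_Γ(H|_Γ)`, then `n • [-g] = [Δ_Γ(-H|_Γ)] = 0`. Conversely,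
`m • [-g] = 0` means `m • (-g) = Δ_Γ f` for some `f`, hence `Δ_Γ(n f + m H|_Γ) = 0`. The reduced
Laplacian is injective by a maximum principle: at a rightmost point where `|f|` is maximal, the
right neighbour contributes strictly less than the maximum. So `n f = -m H|_Γ`, and
`gcd H|_Γ = 1` forces `n ∣ m`.
-/

open Finset

def neighbors (v : ℤ × ℤ) : Finset (ℤ × ℤ) :=
  {(v.1 + 1, v.2), (v.1 - 1, v.2), (v.1, v.2 + 1), (v.1, v.2 - 1)}

lemma adj_iff_mem_neighbors {w v : ℤ × ℤ} : adj w v ↔ w ∈ neighbors v := by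
  obtain ⟨a, b⟩ := w
  obtain ⟨c, d⟩ := v
  simp only [adj, neighbors, mem_insert, mem_singleton, Prod.mk.injEq]
  constructor
  · intro h
    obtain ⟨x, hx⟩ : ∃ x, x = a - c := ⟨_, rfl⟩
    obtain ⟨y, hy⟩ : ∃ y, y = b - d := ⟨_, rfl⟩
    rw [← hx, ← hy] at h
    have ⟨hx₁, hx₂⟩ := abs_le.1 <| (sq_le_one_iff_abs_le_one x).1 (by nlinarith [sq_nonneg y])
    have ⟨hy₁, hy₂⟩ := abs_le.1 <| (sq_le_one_iff_abs_le_one y).1 (by nlinarith [sq_nonneg x])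
    interval_cases x <;> interval_cases y <;> omega
  · rintro (⟨rfl, rfl⟩ | ⟨rfl, rfl⟩ | ⟨rfl, rfl⟩ | ⟨rfl, rfl⟩) <;> ring

lemma card_neighbors_le (v : ℤ × ℤ) : #(neighbors v) ≤ 4 :=
  card_le_four

lemma right_mem_neighbors (v : ℤ × ℤ) : (v.1 + 1, v.2) ∈ neighbors v := by
  simp [neighbors]

lemma HarmonicZ2.sum_neighbors {H : ℤ × ℤ → ℤ} (hH : HarmonicZ2 H) (v : ℤ × ℤ) :
    ∑ w ∈ neighbors v, H w = 4 * H v := by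
  have hnbrs : {w : ℤ × ℤ | adj w v} = ↑(neighbors v) := by
    ext w; simp [adj_iff_mem_neighbors]
  rw [← finsum_mem_coe_finset, ← hnbrs, hH v]

section Laplacian

variable {R : Type*} [CommRing R] {Γ : Finset (ℤ × ℤ)}

lemma lap_restrict_apply (F : ℤ × ℤ → R) (v : ↥Γ) :
    lap Γ (fun w : ↥Γ => F w) v = ∑ w ∈ neighbors v with w ∈ Γ, F w - 4 * F v := by
  rw [lap, sum_filter, sum_attach Γ (fun w => if adj w v.1 then F w else 0), ← sum_filter]
  congr 1
  refine sum_congr ?_ fun _ _ => rfl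
  ext w
  simp only [mem_filter, adj_iff_mem_neighbors]
  tauto

lemma lap_restrict_apply_of_support_subset (F : ℤ × ℤ → R) (hF : ∀ w ∉ Γ, F w = 0) (v : ↥Γ) :
    lap Γ (fun w : ↥Γ => F w) v = ∑ w ∈ neighbors v, F w - 4 * F v := by
  rw [lap_restrict_apply, sum_filter_of_ne fun w _ hw => by_contra fun h => hw (hF w h)]

end Laplacian

section MaximumPrinciple

variable {R : Type*} [CommRing R] [LinearOrder R] [IsStrictOrderedRing R]

lemma sum_abs_neighbors_lt {F : ℤ × ℤ → R} {M : R} (hM : 0 ≤ M) (hle : ∀ w, |F w| ≤ M)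
    {v : ℤ × ℤ} (hlt : |F (v.1 + 1, v.2)| < M) : ∑ w ∈ neighbors v, |F w| < 4 * M :=
  calc ∑ w ∈ neighbors v, |F w| < ∑ _w ∈ neighbors v, M :=
        sum_lt_sum (fun w _ => hle w) ⟨_, right_mem_neighbors v, hlt⟩
    _ = #(neighbors v) • M := sum_const M
    _ ≤ 4 • M := nsmul_le_nsmul_left hM (card_neighbors_le v)
    _ = 4 * M := by rw [nsmul_eq_mul, Nat.cast_ofNat]

lemma eq_zero_of_lap_eq_zero_s5 {Γ : Finset (ℤ × ℤ)} {f : ↥Γ → R} (h : lap Γ f = 0) : f = 0 := by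
  classical
  by_contra hf
  obtain ⟨v₀, hv₀⟩ := Function.ne_iff.mp hf
  obtain ⟨u, -, hu⟩ := Γ.attach.exists_max_image (fun w => |f w|) ⟨v₀, mem_attach _ _⟩
  have hM : 0 < |f u| := (abs_pos.2 hv₀).trans_le (hu v₀ (mem_attach _ _))
  obtain ⟨v, hv, hv_right⟩ := (Γ.attach.filter (|f ·| = |f u|)).exists_max_image
    (fun w => w.1.1) ⟨u, by simp⟩
  rw [mem_filter] at hv
  let F : ℤ × ℤ → R := fun w => if hw : w ∈ Γ then f ⟨w, hw⟩ else 0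
  have hF_le (w : ℤ × ℤ) : |F w| ≤ |f u| := by
    unfold F; split_ifs
    exacts [hu _ (mem_attach _ _), by simp [hM.le]]
  have hF_right : |F (v.1.1 + 1, v.1.2)| < |f u| := by
    unfold F; split_ifs with hw
    · refine (hu _ (mem_attach _ _)).lt_of_ne fun heq => ?_
      have := hv_right ⟨_, hw⟩ (by simpa using heq)
      simp at this
    · simpa using hM
  have hFf : (fun w : ↥Γ => F w) = f := funext fun w => dif_pos w.2
  have hsum : ∑ w ∈ neighbors v, F w = 4 * f v := by
    have := lap_restrict_apply_of_support_subset F (fun w hw => dif_neg hw) v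
    rwa [hFf, h, Pi.zero_apply, congrFun hFf v, eq_comm, sub_eq_zero] at this
  have := sum_abs_neighbors_lt hM.le hF_le hF_right
  have := abs_sum_le_sum_abs F (neighbors v)
  rw [hsum, abs_mul, hv.2, abs_of_pos four_pos] at this
  linarith

end MaximumPrinciple

lemma sandMk_eq_zero_iff {Γ : Finset (ℤ × ℤ)} {f : ↥Γ → ℤ} :
    sandMk Γ f = 0 ↔ ∃ h, lap Γ h = f :=
  QuotientAddGroup.eq_zero_iff f

namespace HarmonicZ2

variable {H : ℤ × ℤ → ℤ} (hH : HarmonicZ2 H) {Γ : Finset (ℤ × ℤ)}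
include hH

lemma lap_restrict_apply (v : ↥Γ) :
    lap Γ (fun w : ↥Γ => H w) v = -∑ w ∈ neighbors v with w ∉ Γ, H w := by
  rw [_root_.lap_restrict_apply, ← hH.sum_neighbors,
    ← sum_filter_add_sum_filter_not (neighbors v) (· ∈ Γ) H]
  ring

lemma dvd_lap_restrict {d : ℤ} (hdiv : ∀ w ∉ Γ, (∃ v ∈ Γ, adj w v) → d ∣ H w) (v : ↥Γ) :
    d ∣ lap Γ (fun w : ↥Γ => H w) v := by
  rw [hH.lap_restrict_apply]
  refine dvd_neg.2 (dvd_sum fun w hw => ?_)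
  rw [mem_filter] at hw
  exact hdiv w hw.2 ⟨v, v.2, adj_iff_mem_neighbors.2 hw.1⟩

end HarmonicZ2

section Order

variable {Γ : Finset (ℤ × ℤ)} {H : ℤ × ℤ → ℤ} {n : ℕ} {g : ↥Γ → ℤ}

lemma nsmul_sandMk_neg_eq_zero_iff (hgcd : Γ.gcd H = 1)
    (hg : lap Γ (fun v : ↥Γ => H v) = (n : ℤ) • g) (m : ℕ) :
    m • sandMk Γ (-g) = 0 ↔ n ∣ m := by
  rw [← map_nsmul, sandMk_eq_zero_iff]
  constructor
  · rintro ⟨f, hf⟩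
    have hker : lap Γ ((n : ℤ) • f + (m : ℤ) • fun v : ↥Γ => H v) = 0 := by
      rw [lap_add, lap_smul, lap_smul, hf, hg]
      ext
      simp only [smul_neg, nsmul_eq_mul, zsmul_eq_mul, Int.cast_natCast, Pi.add_apply, Pi.neg_apply,
        Pi.mul_apply, Pi.natCast_apply, Pi.zero_apply]
      ring
    have hdvd (v : ℤ × ℤ) (hv : v ∈ Γ) : (n : ℤ) ∣ m * H v := by
      have := congrFun (eq_zero_of_lap_eq_zero_s5 hker) ⟨v, hv⟩
      simp only [zsmul_eq_mul, Int.cast_natCast, Pi.add_apply, Pi.mul_apply, Pi.natCast_apply,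
        Pi.zero_apply] at this
      exact ⟨-f ⟨v, hv⟩, by linear_combination this⟩
    have := dvd_gcd hdvd
    rwa [Finset.gcd_mul_left, hgcd, mul_one, Int.normalize_of_nonneg (Int.natCast_nonneg m),
      Int.natCast_dvd_natCast] at this
  · rintro ⟨k, rfl⟩
    refine ⟨-(k : ℤ) • fun v : ↥Γ => H v, ?_⟩
    rw [lap_smul, hg]
    ext
    simp only [Pi.smul_apply, Pi.neg_apply, smul_eq_mul, nsmul_eq_mul]
    push_cast
    ring

lemma addOrderOf_sandMk_neg (hgcd : Γ.gcd H = 1)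
    (hg : lap Γ (fun v : ↥Γ => H v) = (n : ℤ) • g) :
    addOrderOf (sandMk Γ (-g)) = n :=
  Nat.dvd_right_iff_eq.1 fun m =>
    addOrderOf_dvd_iff_nsmul_eq_zero.trans (nsmul_sandMk_neg_eq_zero_iff hgcd hg m)

end Order

theorem harmonic_gives_cyclic_subgroup_general (H : ℤ × ℤ → ℤ) (hH : HarmonicZ2 H)
    (Γ : Finset (ℤ × ℤ))
    (n : ℕ)
    (hgcd : Finset.gcd Γ (fun v => H v) = 1)
    (hdiv : ∀ w : ℤ × ℤ, w ∉ Γ → (∃ v ∈ Γ, adj w v) → (n : ℤ) ∣ H w) :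
    (∀ v : ↥Γ, (n : ℤ) ∣ lap Γ (fun v : ↥Γ => H v.1) v) ∧
    ∀ g : ↥Γ → ℤ, (∀ v : ↥Γ, (n : ℤ) * g v = lap Γ (fun v : ↥Γ => H v.1) v) →
      addOrderOf (sandMk Γ (-g)) = n ∧
      Nat.card ↥(AddSubgroup.zmultiples (sandMk Γ (-g))) = n := by
  refine ⟨hH.dvd_lap_restrict hdiv, fun g hg => ?_⟩
  have hord := addOrderOf_sandMk_neg hgcd (funext fun v => (hg v).symm)
  exact ⟨hord, by rw [Nat.card_zmultiples, hord]⟩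

/-- Let `H : ℤ² → ℤ` be harmonic on all of `ℤ²`, `Γ ⊂ ℤ²` a finite
nonempty convex domain and `n ≥ 2`. If the values of `H` on `Γ` have gcd `1` and
`n` divides `H(w)` for every `w ∈ ∂(ℤ² \ Γ)`, then `n` divides `Δ_Γ(H|_Γ)`
pointwise, and the element `C = [−(1/n)·Δ_Γ(H|_Γ)]` of the sandpile group has
additive order exactly `n`; in particular `{0, C, …, (n−1)C}` is a cyclic
subgroup of `G_Γ` of order `n`. -/
theorem harmonic_gives_cyclic_subgroup (H : ℤ × ℤ → ℤ) (hH : HarmonicZ2 H)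
    (Γ : Finset (ℤ × ℤ)) (hne : Γ.Nonempty) (hconv : IsConvexDomain Γ)
    (n : ℕ) (hn : 2 ≤ n)
    (hgcd : Finset.gcd Γ (fun v => H v) = 1)
    (hdiv : ∀ w : ℤ × ℤ, w ∉ Γ → (∃ v ∈ Γ, adj w v) → (n : ℤ) ∣ H w) :
    (∀ v : ↥Γ, (n : ℤ) ∣ lap Γ (fun v : ↥Γ => H v.1) v) ∧
    ∀ g : ↥Γ → ℤ, (∀ v : ↥Γ, (n : ℤ) * g v = lap Γ (fun v : ↥Γ => H v.1) v) →
      addOrderOf (sandMk Γ (-g)) = n ∧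
      Nat.card ↥(AddSubgroup.zmultiples (sandMk Γ (-g))) = n :=
  harmonic_gives_cyclic_subgroup_general H hH Γ n hgcd hdiv
end

section
/- Let N ≥ 1 be such that N+1 is a prime number. Then the sandpile group G_{Γ_N} on an N×N square domain Γ_N ⊂ ℤ² contains a cyclic subgroup of order N+1. -/
/-- The `N×N` square domain `Γ_N = {1, …, N} × {1, …, N} ⊂ ℤ²`. -/
noncomputable def squareDomain (N : ℕ) : Finset (ℤ × ℤ) :=
  Finset.Icc 1 (N : ℤ) ×ˢ Finset.Icc 1 (N : ℤ)

/-!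
The function `(x, y) ↦ x * y` is discrete harmonic on `ℤ²` and, modulo `N + 1`, vanishes at
every lattice point adjacent to the square `Γ_N` from outside (where `x` or `y` is `0` or
`N + 1`). Since `Δ` is self-adjoint, pairing a chip configuration with `x * y mod (N + 1)`
therefore descends to a homomorphism `G_{Γ_N} → ℤ/(N + 1)`, which sends the single chip at
`(1, 1)` to `1`. By the maximum principle `Δ` is injective, so `det Δ ≠ 0` kills `G_Γ` (via the
adjugate); the chip at `(1, 1)` thus has finite order divisible by `N + 1`, and a multiple of it
has order exactly `N + 1`.
-/

open Finset

def nbrs (v : ℤ × ℤ) : Finset (ℤ × ℤ) :=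
  {(v.1 + 1, v.2), (v.1 - 1, v.2), (v.1, v.2 + 1), (v.1, v.2 - 1)}

lemma adj_iff_mem_nbrs {w v : ℤ × ℤ} : adj w v ↔ w ∈ nbrs v := by
  obtain ⟨a, b⟩ := w
  obtain ⟨x, y⟩ := v
  obtain ⟨c, rfl⟩ : ∃ c, a = x + c := ⟨a - x, by ring⟩
  obtain ⟨d, rfl⟩ : ∃ d, b = y + d := ⟨b - y, by ring⟩
  simp only [adj, nbrs, mem_insert, mem_singleton, Prod.mk.injEq,
    sub_eq_add_neg, add_right_inj, add_eq_left]
  constructor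
  · intro h
    have hc : -1 ≤ c ∧ c ≤ 1 := by constructor <;> nlinarith [sq_nonneg d]
    have hd : -1 ≤ d ∧ d ≤ 1 := by constructor <;> nlinarith [sq_nonneg c]
    obtain ⟨hc₁, hc₂⟩ := hc
    obtain ⟨hd₁, hd₂⟩ := hd
    interval_cases c <;> interval_cases d <;> simp at h ⊢
  · rintro (⟨rfl, rfl⟩ | ⟨rfl, rfl⟩ | ⟨rfl, rfl⟩ | ⟨rfl, rfl⟩) <;> norm_num

lemma adj_comm (w v : ℤ × ℤ) : adj w v ↔ adj v w := by
  unfold adj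
  constructor <;> intro h <;> linear_combination h

lemma sum_nbrs {M : Type*} [AddCommMonoid M] (F : ℤ × ℤ → M) (v : ℤ × ℤ) :
    ∑ w ∈ nbrs v, F w =
      F (v.1 + 1, v.2) + F (v.1 - 1, v.2) + F (v.1, v.2 + 1) + F (v.1, v.2 - 1) := by
  rw [nbrs, sum_insert, sum_insert, sum_pair, ← add_assoc, ← add_assoc]
  all_goals simp only [ne_eq, mem_insert, mem_singleton, Prod.ext_iff, not_or]; omega

section Laplacian

variable (Γ : Finset (ℤ × ℤ)) {R : Type*} [CommRing R]

lemma lap_apply_eq_sum_nbrs_s7 (F : ℤ × ℤ → R) (hF : ∀ w ∉ Γ, ∀ v ∈ Γ, adj w v → F w = 0)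
    (v : Γ) :
    lap Γ (fun w => F w) v = ∑ w ∈ nbrs v, F w - 4 * F v := by
  have attach_eq : ∑ w ∈ Γ.attach with adj w.1 v, F w = ∑ w ∈ Γ with adj w v, F w := by
    rw [sum_filter, sum_filter, sum_attach Γ (fun w => if adj w v then F w else 0)]
  rw [lap, attach_eq]
  congr 1
  refine sum_subset (fun w hw => adj_iff_mem_nbrs.mp (mem_filter.mp hw).2) fun w hw hwΓ => ?_
  have hadj := adj_iff_mem_nbrs.mpr hw
  exact hF w (fun h => hwΓ (mem_filter.mpr ⟨h, hadj⟩)) v v.2 hadj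

lemma sum_mul_lap_comm (f g : Γ → R) : ∑ v, f v * lap Γ g v = ∑ v, g v * lap Γ f v := by
  have sum_adj_comm : ∑ v : Γ, ∑ w ∈ Γ.attach with adj w.1 v, f v * g w =
      ∑ v : Γ, ∑ w ∈ Γ.attach with adj w.1 v, g v * f w := by
    simp only [sum_filter, ← univ_eq_attach]
    rw [sum_comm]
    simp only [adj_comm, mul_comm]
  simp only [lap, mul_sub, mul_sum, sum_sub_distrib, sum_adj_comm]
  exact congrArg _ (sum_congr rfl fun _ _ => by ring)

lemma intCast_lap (f : Γ → ℤ) (v : Γ) :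
    ((lap Γ f v : ℤ) : R) = lap Γ (fun w => (f w : R)) v := by
  simp [lap]

def configPairing (h : Γ → R) : (Γ → ℤ) →+ R :=
  AddMonoidHom.mk' (fun u => ∑ v, h v * u v) fun u u' => by
    simp only [Pi.add_apply, Int.cast_add, mul_add, sum_add_distrib]

lemma configPairing_lap {h : Γ → R} (hh : lap Γ h = 0) (f : Γ → ℤ) :
    configPairing Γ h (lap Γ f) = 0 := by
  simp only [configPairing, AddMonoidHom.mk'_apply, intCast_lap, sum_mul_lap_comm Γ h, hh,
    Pi.zero_apply, mul_zero, sum_const_zero]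

def sandpileChar {h : Γ → R} (hh : lap Γ h = 0) : SandpileGroup Γ →+ R :=
  QuotientAddGroup.lift (lapHom Γ).range (configPairing Γ h) fun _ ⟨f, hf⟩ =>
    hf ▸ configPairing_lap Γ hh f

lemma sandpileChar_sandMk_single {h : Γ → R} (hh : lap Γ h = 0) (v : Γ) :
    sandpileChar Γ hh (sandMk Γ (Pi.single v 1)) = h v := by
  refine (QuotientAddGroup.lift_mk' _ _ _).trans ?_
  simp [configPairing, Pi.single_apply]

end Laplacian

section Torsion

open Matrix

variable (Γ : Finset (ℤ × ℤ))

/-- At a maximiser `z` of `|g|` that is leftmost among all maximisers, the left neighbour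
contributes strictly less than `|g z|` to the mean value identity `4 g z = ∑ w ∈ nbrs z, g w`. -/
lemma eq_zero_of_lap_eq_zero_s7 {g : Γ → ℤ} (hg : lap Γ g = 0) : g = 0 := by
  by_contra hne
  obtain ⟨v₀, hv₀⟩ := Function.ne_iff.mp hne
  obtain ⟨z, -, hz⟩ := exists_max_image univ (fun v : Γ => toLex (|g v|, -v.1.1))
    ⟨v₀, mem_univ _⟩
  have hz' (v : Γ) : |g v| < |g z| ∨ |g v| = |g z| ∧ -v.1.1 ≤ -z.1.1 :=
    Prod.Lex.toLex_le_toLex.mp (hz v (mem_univ _))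
  have hpos : 0 < |g z| := by
    have := hz' v₀
    have := abs_pos.mpr hv₀
    omega
  set G : ℤ × ℤ → ℤ := Function.extend Subtype.val g 0
  have hG (v : Γ) : G v = g v := Subtype.val_injective.extend_apply g 0 v
  have hG₀ (w : ℤ × ℤ) (hw : w ∉ Γ) : G w = 0 :=
    Function.extend_apply' _ _ _ fun ⟨v, hv⟩ => hw (hv ▸ v.2)
  have hle (w : ℤ × ℤ) : |G w| ≤ |g z| := by
    by_cases hw : w ∈ Γ
    · have := hz' ⟨w, hw⟩
      rw [hG ⟨w, hw⟩]
      omega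
    · rw [hG₀ w hw, abs_zero]
      exact hpos.le
  have hleft : |G (z.1.1 - 1, z.1.2)| < |g z| := by
    by_cases hw : (z.1.1 - 1, z.1.2) ∈ Γ
    · have := hz' ⟨_, hw⟩
      dsimp only at this
      rw [hG ⟨_, hw⟩]
      omega
    · rwa [hG₀ _ hw, abs_zero]
  have hmean := congrFun hg z
  rw [← funext hG, lap_apply_eq_sum_nbrs_s7 Γ G (fun w hw _ _ _ => hG₀ w hw), sum_nbrs, hG,
    Pi.zero_apply] at hmean
  have := abs_lt.mp hleft
  have := abs_le.mp (hle (z.1.1 + 1, z.1.2))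
  have := abs_le.mp (hle (z.1.1, z.1.2 + 1))
  have := abs_le.mp (hle (z.1.1, z.1.2 - 1))
  cases abs_cases (g z) <;> omega

def lapMatrix : Matrix Γ Γ ℤ :=
  Matrix.of fun v w => (if adj w v then 1 else 0) - if w = v then 4 else 0

lemma lap_eq_mulVec (f : Γ → ℤ) : lap Γ f = lapMatrix Γ *ᵥ f := by
  funext v
  simp [lap, lapMatrix, mulVec, dotProduct, sub_mul, sum_sub_distrib, sum_filter, univ_eq_attach]

lemma det_lapMatrix_ne_zero : (lapMatrix Γ).det ≠ 0 := fun h => by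
  obtain ⟨f, hf, hf₀⟩ := Matrix.exists_mulVec_eq_zero_iff.mpr h
  exact hf (eq_zero_of_lap_eq_zero_s7 Γ (by rwa [lap_eq_mulVec]))

lemma isAddTorsion_sandpileGroup : IsAddTorsion (SandpileGroup Γ) := by
  intro x
  obtain ⟨u, rfl⟩ : ∃ u, sandMk Γ u = x := QuotientAddGroup.mk'_surjective _ x
  refine isOfFinAddOrder_iff_zsmul_eq_zero.mpr ⟨_, det_lapMatrix_ne_zero Γ, ?_⟩
  rw [← map_zsmul]
  refine (QuotientAddGroup.eq_zero_iff _).mpr ⟨(lapMatrix Γ).adjugate *ᵥ u, ?_⟩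
  simp [lapHom, lap_eq_mulVec, mulVec_mulVec, mul_adjugate]

end Torsion

lemma exists_addOrderOf_eq_of_map_eq_one {G : Type*} [AddMonoid G] {m : ℕ} (φ : G →+ ZMod m)
    {x : G} (hx : IsOfFinAddOrder x) (hφx : φ x = 1) : ∃ y : G, addOrderOf y = m := by
  have hdvd : m ∣ addOrderOf x := by
    have := congrArg φ (addOrderOf_nsmul_eq_zero x)
    rwa [map_nsmul, hφx, nsmul_one, map_zero, ZMod.natCast_eq_zero_iff] at this
  have hx₀ : addOrderOf x ≠ 0 := hx.addOrderOf_pos.ne'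
  have hquot : addOrderOf x / m ≠ 0 := left_ne_zero_of_mul (Nat.div_mul_cancel hdvd ▸ hx₀)
  refine ⟨(addOrderOf x / m) • x, ?_⟩
  rw [addOrderOf_nsmul_of_dvd hquot (Nat.div_dvd_of_dvd hdvd), Nat.div_div_self hdvd hx₀]

lemma mem_squareDomain {N : ℕ} {v : ℤ × ℤ} :
    v ∈ squareDomain N ↔ 1 ≤ v.1 ∧ v.1 ≤ N ∧ 1 ≤ v.2 ∧ v.2 ≤ N := by
  simp [squareDomain, and_assoc]

lemma lap_squareDomain_mul_eq_zero (N : ℕ) :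
    lap (squareDomain N) (fun v => (v.1.1 * v.1.2 : ZMod (N + 1))) = 0 := by
  have outside (w : ℤ × ℤ) (hw : w ∉ squareDomain N) (v : ℤ × ℤ) (hv : v ∈ squareDomain N)
      (hadj : adj w v) : (w.1 * w.2 : ZMod (N + 1)) = 0 := by
    rw [mem_squareDomain] at hv hw
    rw [adj_iff_mem_nbrs, nbrs] at hadj
    simp only [mem_insert, mem_singleton] at hadj
    have hcoord : w.1 = 0 ∨ w.1 = N + 1 ∨ w.2 = 0 ∨ w.2 = N + 1 := by
      rcases hadj with rfl | rfl | rfl | rfl <;> omega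
    have hdvd : ((N + 1 : ℕ) : ℤ) ∣ w.1 ∨ ((N + 1 : ℕ) : ℤ) ∣ w.2 := by
      rcases hcoord with h | h | h | h <;> simp [h]
    rcases hdvd with h | h <;> simp [(ZMod.intCast_zmod_eq_zero_iff_dvd _ _).mpr h]
  funext v
  rw [Pi.zero_apply, lap_apply_eq_sum_nbrs_s7 _ (fun w => (w.1 * w.2 : ZMod (N + 1))) outside,
    sum_nbrs]
  push_cast
  ring

theorem square_has_cyclic_subgroup_prime_general (N : ℕ) (hN : 1 ≤ N) :
    ∃ S : AddSubgroup (SandpileGroup (squareDomain N)),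
      IsAddCyclic ↥S ∧ Nat.card ↥S = N + 1 := by
  have corner : ((1, 1) : ℤ × ℤ) ∈ squareDomain N := mem_squareDomain.mpr (by omega)
  let φ := sandpileChar _ (lap_squareDomain_mul_eq_zero N)
  obtain ⟨y, hy⟩ := exists_addOrderOf_eq_of_map_eq_one φ (isAddTorsion_sandpileGroup _ _)
    (sandpileChar_sandMk_single _ _ ⟨(1, 1), corner⟩ |>.trans (by simp))
  exact ⟨AddSubgroup.zmultiples y, inferInstance, by rw [Nat.card_zmultiples, hy]⟩

/-- If `N+1` is prime, the sandpile group on the `N×N`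
square domain contains a cyclic subgroup of order `N+1`. -/
theorem square_has_cyclic_subgroup_prime (N : ℕ) (hN : 1 ≤ N) (hp : Nat.Prime (N + 1)) :
    ∃ S : AddSubgroup (SandpileGroup (squareDomain N)),
      IsAddCyclic ↥S ∧ Nat.card ↥S = N + 1 :=
  square_has_cyclic_subgroup_prime_general N hN
end
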